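/- Let v ∈ ℝ³ with |v| < 1 and let g : ℝ³ → ℂ be a Schwartz function. Then lim_{t → +∞} ∫_{ℝ³} (|p| − p·v)^{-1} e^{i(|p| − p·v)t} g(p) dp/(2|p|) = 0, and similarly the limit as t → −∞ is 0. -/

import Mathlib

open MeasureTheory Complex Filter

noncomputable section

abbrev E3 := EuclideanSpace ℝ (Fin 3)

open Metric Set MeasureTheory.Measure Real
open scoped ENNReal NNReal FourierTransform RealInnerProductSpace

namespace EndpointAux

variable (v : E3) (g : SchwartzMap E3 ℂ)

def F (p : E3) : ℂ :=
  (((‖p‖ - (inner ℝ p v : ℝ) : ℝ)) : ℂ)⁻¹ * g p / ((2 * ‖p‖ : ℝ) : ℂ)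

lemma omega_lower (hv : ‖v‖ < 1) (p : E3) :
    (1 - ‖v‖) * ‖p‖ ≤ ‖p‖ - (inner ℝ p v : ℝ) := by
  have h := real_inner_le_norm p v
  nlinarith [norm_nonneg p]

lemma measurable_F : Measurable (F v g) := by
  have h1 : Continuous fun p : E3 => ((‖p‖ - (inner ℝ p v : ℝ) : ℝ) : ℂ) :=
    Complex.continuous_ofReal.comp (continuous_norm.sub (continuous_id.inner continuous_const))
  have h2 : Continuous fun p : E3 => ((2 * ‖p‖ : ℝ) : ℂ) :=
    Complex.continuous_ofReal.comp (continuous_const.mul continuous_norm)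
  exact ((h1.measurable.inv.mul g.continuous.measurable).mul h2.measurable.inv)

lemma norm_F_le (hv : ‖v‖ < 1) (p : E3) :
    ‖F v g p‖ ≤ (1 - ‖v‖)⁻¹ * (2 * ‖p‖ ^ 2)⁻¹ * ‖g p‖ := by
  rcases eq_or_ne p 0 with rfl | hp
  · simp [F]
  · have hp0 : 0 < ‖p‖ := norm_pos_iff.2 hp
    have h1 : (0:ℝ) < 1 - ‖v‖ := by linarith
    have hlow := omega_lower v hv p
    have hω : 0 < ‖p‖ - (inner ℝ p v : ℝ) := lt_of_lt_of_le (by positivity) hlow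
    have hnorm : ‖F v g p‖ = (‖p‖ - (inner ℝ p v : ℝ))⁻¹ * ‖g p‖ * (2 * ‖p‖)⁻¹ := by
      rw [F, norm_div, norm_mul, norm_inv, Complex.norm_real, Complex.norm_real,
        Real.norm_of_nonneg hω.le, Real.norm_of_nonneg (by positivity), div_eq_mul_inv]
    rw [hnorm]
    have step : (‖p‖ - (inner ℝ p v : ℝ))⁻¹ ≤ ((1 - ‖v‖) * ‖p‖)⁻¹ := by
      apply inv_anti₀ (by positivity) hlow
    calc (‖p‖ - (inner ℝ p v : ℝ))⁻¹ * ‖g p‖ * (2 * ‖p‖)⁻¹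
        ≤ ((1 - ‖v‖) * ‖p‖)⁻¹ * ‖g p‖ * (2 * ‖p‖)⁻¹ :=
          mul_le_mul_of_nonneg_right (mul_le_mul_of_nonneg_right step (norm_nonneg _))
            (by positivity)
      _ = (1 - ‖v‖)⁻¹ * (2 * ‖p‖ ^ 2)⁻¹ * ‖g p‖ := by
          rw [mul_inv, mul_inv, sq, mul_inv]
          ring

lemma exists_g_bound : ∃ C : ℝ, 0 ≤ C ∧ ∀ p : E3, ‖g p‖ ≤ C * (1 + ‖p‖ ^ 2)⁻¹ := by
  obtain ⟨C0, hC0pos, hC0⟩ := g.decay 0 0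
  obtain ⟨C2, hC2pos, hC2⟩ := g.decay 2 0
  refine ⟨C0 + C2, by positivity, fun p => ?_⟩
  have h0 := hC0 p
  have h2 := hC2 p
  rw [norm_iteratedFDeriv_zero] at h0 h2
  rw [pow_zero, one_mul] at h0
  have hpos : (0:ℝ) < 1 + ‖p‖ ^ 2 := by positivity
  rw [← div_eq_mul_inv, le_div_iff₀ hpos]
  nlinarith

lemma integrable_F (hv : ‖v‖ < 1) : Integrable (F v g) := by
  obtain ⟨Cg, hCg0, hCg⟩ := exists_g_bound g
  have h1 : (0:ℝ) < 1 - ‖v‖ := by linarith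
  set A : ℝ := (1 - ‖v‖)⁻¹ * 2⁻¹ * Cg with hA
  have hA0 : 0 ≤ A := by positivity
  refine ⟨(measurable_F v g).aestronglyMeasurable, ?_⟩
  set f : E3 → ℝ≥0∞ := fun p => (‖F v g p‖₊ : ℝ≥0∞) with hf
  have hfm : Measurable f := (measurable_F v g).nnnorm.coe_nnreal_ennreal
  have hdim : Module.finrank ℝ E3 = 3 := finrank_euclideanSpace_fin
  have hmp := (volume : Measure E3).measurePreserving_homeomorphUnitSphereProd
  rw [hdim] at hmp
  set κ : ℝ≥0∞ := ∫⁻ r : ℝ, ENNReal.ofReal (A * (1 + r ^ 2)⁻¹) with hκ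
  have hκ_lt : κ < ⊤ := by
    have hint : Integrable (fun r : ℝ => A * (1 + r ^ 2)⁻¹) := by
      have := integrable_inv_one_add_sq.const_mul A
      simpa [sq] using this
    refine lt_of_le_of_lt (lintegral_mono fun r => Real.ofReal_le_enorm _) hint.2
  have key : ∫⁻ p, f p ∂(volume : Measure E3) ≤ κ * (volume : Measure E3).toSphere univ := by
    calc ∫⁻ p, f p ∂(volume : Measure E3)
        = ∫⁻ p in ({0}ᶜ : Set E3), f p ∂(volume : Measure E3) := by
          rw [MeasureTheory.restrict_compl_singleton]
      _ = ∫⁻ x : ({0}ᶜ : Set E3), f x ∂((volume : Measure E3).comap Subtype.val) :=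
          (lintegral_subtype_comap (measurableSet_singleton (0:E3)).compl _).symm
      _ = ∫⁻ y : sphere (0:E3) 1 × Ioi (0:ℝ), f ((y.2 : ℝ) • (y.1 : E3))
            ∂((volume : Measure E3).toSphere.prod (volumeIoiPow 2)) := by
          rw [← hmp.lintegral_comp_emb (Homeomorph.measurableEmbedding _)]
          refine lintegral_congr fun x => ?_
          simp only [homeomorphUnitSphereProd_apply_fst_coe,
            homeomorphUnitSphereProd_apply_snd_coe]
          rw [smul_smul, mul_inv_cancel₀ (norm_ne_zero_iff.2 x.2), one_smul]
      _ = ∫⁻ θ : sphere (0:E3) 1, ∫⁻ r : Ioi (0:ℝ), f ((r : ℝ) • (θ : E3)) ∂(volumeIoiPow 2)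
            ∂(volume : Measure E3).toSphere := by
          refine lintegral_prod _ ?_
          exact (hfm.comp ((measurable_subtype_coe.comp measurable_snd).smul
            (measurable_subtype_coe.comp measurable_fst))).aemeasurable
      _ ≤ ∫⁻ _θ : sphere (0:E3) 1, κ ∂(volume : Measure E3).toSphere := by
          refine lintegral_mono fun θ => ?_
          have hθ : ‖(θ : E3)‖ = 1 := mem_sphere_zero_iff_norm.1 θ.2
          calc ∫⁻ r : Ioi (0:ℝ), f ((r : ℝ) • (θ : E3)) ∂(volumeIoiPow 2)
              = ∫⁻ r : Ioi (0:ℝ),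
                  (fun s : ℝ => ENNReal.ofReal (s ^ 2) * f (s • (θ : E3))) (r : ℝ)
                  ∂((volume : Measure ℝ).comap Subtype.val) := by
                have hmeas : Measurable fun r : Ioi (0:ℝ) => f ((r : ℝ) • (θ : E3)) :=
                  hfm.comp (measurable_subtype_coe.smul measurable_const)
                exact lintegral_withDensity_eq_lintegral_mul _
                  ((measurable_subtype_coe.pow_const 2).ennreal_ofReal) hmeas
            _ = ∫⁻ r in Ioi (0:ℝ), ENNReal.ofReal (r ^ 2) * f (r • (θ : E3)) :=
                lintegral_subtype_comap measurableSet_Ioi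
                  (fun s : ℝ => ENNReal.ofReal (s ^ 2) * f (s • (θ : E3)))
            _ ≤ ∫⁻ r in Ioi (0:ℝ), ENNReal.ofReal (A * (1 + r ^ 2)⁻¹) := by
                refine setLIntegral_mono
                  ((((measurable_id.pow_const 2).const_add 1).inv.const_mul A).ennreal_ofReal)
                  (fun r hr => ?_)
                have hr0 : (0:ℝ) < r := hr
                have hrw : ‖(r • (θ : E3))‖ = r := by
                  rw [norm_smul, Real.norm_eq_abs, abs_of_pos hr0, hθ, mul_one]
                have hnrm : ‖F v g (r • (θ : E3))‖ ≤
                    (1 - ‖v‖)⁻¹ * (2 * r ^ 2)⁻¹ * ‖g (r • (θ : E3))‖ := by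
                  have h := norm_F_le v g hv (r • (θ : E3))
                  rwa [hrw] at h
                have hgb : ‖g (r • (θ : E3))‖ ≤ Cg * (1 + r ^ 2)⁻¹ := by
                  have h := hCg (r • (θ : E3))
                  rwa [hrw] at h
                have hreal : r ^ 2 * ‖F v g (r • (θ : E3))‖ ≤ A * (1 + r ^ 2)⁻¹ := by
                  have hrr : r ^ 2 * (2 * r ^ 2)⁻¹ = 2⁻¹ := by
                    field_simp
                  calc r ^ 2 * ‖F v g (r • (θ : E3))‖
                      ≤ r ^ 2 * ((1 - ‖v‖)⁻¹ * (2 * r ^ 2)⁻¹ * (Cg * (1 + r ^ 2)⁻¹)) := by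
                        refine mul_le_mul_of_nonneg_left (hnrm.trans ?_) (sq_nonneg r)
                        exact mul_le_mul_of_nonneg_left hgb (by positivity)
                    _ = A * (1 + r ^ 2)⁻¹ := by
                        rw [hA]
                        linear_combination ((1 - ‖v‖)⁻¹ * (Cg * (1 + r ^ 2)⁻¹)) * hrr
                calc ENNReal.ofReal (r ^ 2) * f (r • (θ : E3))
                    = ENNReal.ofReal (r ^ 2 * ‖F v g (r • (θ : E3))‖) := by
                      rw [ENNReal.ofReal_mul (sq_nonneg r), ofReal_norm, enorm_eq_nnnorm]
                  _ ≤ ENNReal.ofReal (A * (1 + r ^ 2)⁻¹) := ENNReal.ofReal_le_ofReal hreal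
            _ ≤ κ := setLIntegral_le_lintegral _ _
      _ = κ * (volume : Measure E3).toSphere univ := lintegral_const κ
  exact lt_of_le_of_lt key (ENNReal.mul_lt_top hκ_lt (measure_lt_top _ _))


def phase (t : ℝ) (p : E3) : ℂ :=
  Complex.exp (Complex.I * (((‖p‖ - (inner ℝ p v : ℝ)) * t : ℝ) : ℂ))

lemma norm_phase (t : ℝ) (p : E3) : ‖phase v t p‖ = 1 := by
  rw [phase, Complex.norm_exp]
  norm_num [Complex.mul_re]

def Gt (t : ℝ) (y : sphere (0:E3) 1 × Ioi (0:ℝ)) : ℂ :=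
  phase v t ((y.2 : ℝ) • (y.1 : E3)) * F v g ((y.2 : ℝ) • (y.1 : E3))

def kfun (θ : sphere (0:E3) 1) : ℝ → ℂ :=
  (Ioi (0:ℝ)).indicator fun r => (r ^ 2 : ℝ) • F v g (r • (θ : E3))

lemma main (hv : ‖v‖ < 1) (l : Filter ℝ) [l.IsCountablyGenerated]
    (hl : Tendsto (fun t : ℝ => t) l (cocompact ℝ)) :
    Tendsto (fun t : ℝ => ∫ p : E3,
        (((‖p‖ - (inner ℝ p v : ℝ) : ℝ)) : ℂ)⁻¹
          * Complex.exp (Complex.I * (((‖p‖ - (inner ℝ p v : ℝ)) * t : ℝ) : ℂ))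
          * g p / ((2 * ‖p‖ : ℝ) : ℂ))
      l (nhds 0) := by
  have hdim : Module.finrank ℝ E3 = 3 := finrank_euclideanSpace_fin
  have hmp0 := (volume : Measure E3).measurePreserving_homeomorphUnitSphereProd
  rw [hdim] at hmp0
  have hmp : MeasurePreserving (⇑(homeomorphUnitSphereProd E3))
      ((volume : Measure E3).comap Subtype.val)
      ((volume : Measure E3).toSphere.prod (volumeIoiPow 2)) := hmp0
  have hFint := integrable_F v g hv
  -- transfer integrability to the subtype
  have hval : MeasurePreserving (Subtype.val : (({0}ᶜ : Set E3)) → E3)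
      ((volume : Measure E3).comap Subtype.val) volume := by
    refine ⟨measurable_subtype_coe, ?_⟩
    rw [(MeasurableEmbedding.subtype_coe (measurableSet_singleton (0:E3)).compl).map_comap,
      Subtype.range_coe, MeasureTheory.restrict_compl_singleton]
  have hFcomap : Integrable (fun x : ({0}ᶜ : Set E3) => F v g (x : E3))
      ((volume : Measure E3).comap Subtype.val) :=
    (hval.integrable_comp_emb
      (MeasurableEmbedding.subtype_coe (measurableSet_singleton (0:E3)).compl)).2 hFint
  have hcompeq : ((fun y : sphere (0:E3) 1 × Ioi (0:ℝ) => F v g ((y.2 : ℝ) • (y.1 : E3))) ∘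
      (homeomorphUnitSphereProd E3)) = fun x : ({0}ᶜ : Set E3) => F v g (x : E3) := by
    funext x
    simp only [Function.comp_apply, homeomorphUnitSphereProd_apply_fst_coe,
      homeomorphUnitSphereProd_apply_snd_coe]
    rw [smul_smul, mul_inv_cancel₀ (norm_ne_zero_iff.2 x.2), one_smul]
  have hGint : Integrable (fun y : sphere (0:E3) 1 × Ioi (0:ℝ) => F v g ((y.2 : ℝ) • (y.1 : E3)))
      ((volume : Measure E3).toSphere.prod (volumeIoiPow 2)) := by
    rw [← hmp.integrable_comp_emb (Homeomorph.measurableEmbedding _), hcompeq]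
    exact hFcomap
  have hGt_int : ∀ t : ℝ, Integrable (Gt v g t)
      ((volume : Measure E3).toSphere.prod (volumeIoiPow 2)) := by
    intro t
    refine hGint.bdd_mul ?_ (Eventually.of_forall fun y => (norm_phase v t _).le)
    have hc : Continuous fun y : sphere (0:E3) 1 × Ioi (0:ℝ) =>
        phase v t ((y.2 : ℝ) • (y.1 : E3)) := by
      apply Complex.continuous_exp.comp
      apply continuous_const.mul
      apply Complex.continuous_ofReal.comp
      have hsm : Continuous fun y : sphere (0:E3) 1 × Ioi (0:ℝ) => (y.2 : ℝ) • (y.1 : E3) :=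
        (continuous_subtype_val.comp continuous_snd).smul
          (continuous_subtype_val.comp continuous_fst)
      exact ((hsm.norm.sub (hsm.inner continuous_const)).mul continuous_const)
    exact hc.aestronglyMeasurable
  -- step 1 : polar coordinates
  have step1 : ∀ t : ℝ, (∫ p : E3,
      (((‖p‖ - (inner ℝ p v : ℝ) : ℝ)) : ℂ)⁻¹
        * Complex.exp (Complex.I * (((‖p‖ - (inner ℝ p v : ℝ)) * t : ℝ) : ℂ))
        * g p / ((2 * ‖p‖ : ℝ) : ℂ))
      = ∫ θ : sphere (0:E3) 1, (∫ r : Ioi (0:ℝ), Gt v g t (θ, r) ∂(volumeIoiPow 2))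
          ∂(volume : Measure E3).toSphere := by
    intro t
    have hFG : ∀ p : E3,
        (((‖p‖ - (inner ℝ p v : ℝ) : ℝ)) : ℂ)⁻¹
          * Complex.exp (Complex.I * (((‖p‖ - (inner ℝ p v : ℝ)) * t : ℝ) : ℂ))
          * g p / ((2 * ‖p‖ : ℝ) : ℂ) = phase v t p * F v g p := by
      intro p
      rw [phase, F]
      ring
    calc (∫ p : E3,
        (((‖p‖ - (inner ℝ p v : ℝ) : ℝ)) : ℂ)⁻¹
          * Complex.exp (Complex.I * (((‖p‖ - (inner ℝ p v : ℝ)) * t : ℝ) : ℂ))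
          * g p / ((2 * ‖p‖ : ℝ) : ℂ))
        = ∫ p : E3, phase v t p * F v g p := by
          exact integral_congr_ae (Eventually.of_forall hFG)
      _ = ∫ p in ({0}ᶜ : Set E3), phase v t p * F v g p := by
          rw [MeasureTheory.restrict_compl_singleton]
      _ = ∫ x : ({0}ᶜ : Set E3), phase v t (x : E3) * F v g (x : E3)
            ∂((volume : Measure E3).comap Subtype.val) :=
          (integral_subtype_comap (measurableSet_singleton (0:E3)).compl _).symm
      _ = ∫ y : sphere (0:E3) 1 × Ioi (0:ℝ), Gt v g t y
            ∂((volume : Measure E3).toSphere.prod (volumeIoiPow 2)) := by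
          rw [← hmp.integral_comp (Homeomorph.measurableEmbedding _) (Gt v g t)]
          refine integral_congr_ae (Eventually.of_forall fun x => ?_)
          simp only [Gt, homeomorphUnitSphereProd_apply_fst_coe,
            homeomorphUnitSphereProd_apply_snd_coe]
          rw [smul_smul, mul_inv_cancel₀ (norm_ne_zero_iff.2 x.2), one_smul]
      _ = ∫ θ : sphere (0:E3) 1, (∫ r : Ioi (0:ℝ), Gt v g t (θ, r) ∂(volumeIoiPow 2))
            ∂(volume : Measure E3).toSphere := integral_prod _ (hGt_int t)
  -- pointwise limit of inner integrals
  have hlim : ∀ θ : sphere (0:E3) 1,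
      Tendsto (fun t : ℝ => ∫ r : Ioi (0:ℝ), Gt v g t (θ, r) ∂(volumeIoiPow 2)) l (nhds 0) := by
    intro θ
    have hθn : ‖(θ : E3)‖ = 1 := mem_sphere_zero_iff_norm.1 θ.2
    set c : ℝ := 1 - (inner ℝ (θ : E3) v : ℝ) with hc_def
    have hc : 0 < c := by
      have h := real_inner_le_norm (θ : E3) v
      rw [hθn, one_mul] at h
      linarith
    have hJw : ∀ t : ℝ, (∫ r : Ioi (0:ℝ), Gt v g t (θ, r) ∂(volumeIoiPow 2))
        = ∫ r : ℝ, 𝐞 (-(r * (-(c * t) / (2 * π)))) • kfun v g θ r := by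
      intro t
      calc (∫ r : Ioi (0:ℝ), Gt v g t (θ, r) ∂(volumeIoiPow 2))
          = ∫ r : Ioi (0:ℝ),
              (fun s : ℝ => Real.toNNReal (s ^ 2) •
                (phase v t (s • (θ : E3)) * F v g (s • (θ : E3)))) (r : ℝ)
              ∂((volume : Measure ℝ).comap Subtype.val) := by
            simp only [Measure.volumeIoiPow, ENNReal.ofReal]
            rw [integral_withDensity_eq_integral_smul
              ((measurable_subtype_coe.pow_const 2).real_toNNReal)]
            rfl
        _ = ∫ r in Ioi (0:ℝ), Real.toNNReal (r ^ 2) •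
              (phase v t (r • (θ : E3)) * F v g (r • (θ : E3))) ∂volume :=
            integral_subtype_comap measurableSet_Ioi
              (fun s : ℝ => Real.toNNReal (s ^ 2) •
                (phase v t (s • (θ : E3)) * F v g (s • (θ : E3))))
        _ = ∫ r : ℝ, (Ioi (0:ℝ)).indicator
              (fun s => Real.toNNReal (s ^ 2) •
                (phase v t (s • (θ : E3)) * F v g (s • (θ : E3)))) r ∂volume :=
            (integral_indicator measurableSet_Ioi).symm
        _ = ∫ r : ℝ, 𝐞 (-(r * (-(c * t) / (2 * π)))) • kfun v g θ r := by
            refine integral_congr_ae (Eventually.of_forall fun r => ?_)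
            by_cases hr : r ∈ Ioi (0:ℝ)
            · simp only [kfun, indicator_of_mem hr]
              have hr0 : (0:ℝ) < r := hr
              have hrw : ‖r • (θ : E3)‖ = r := by
                rw [norm_smul, Real.norm_eq_abs, abs_of_pos hr0, hθn, mul_one]
              have hin : (inner ℝ (r • (θ : E3)) v : ℝ) = r * (inner ℝ (θ : E3) v : ℝ) :=
                real_inner_smul_left _ _ _
              have hphase : phase v t (r • (θ : E3)) =
                  Complex.exp (Complex.I * ((r * (c * t) : ℝ) : ℂ)) := by
                have harg : (‖r • (θ : E3)‖ - (inner ℝ (r • (θ : E3)) v : ℝ)) * t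
                    = r * (c * t) := by
                  rw [hrw, hin, hc_def]; ring
                rw [phase, harg]
              have harg2 : 2 * π * (-(r * (-(c * t) / (2 * π)))) = r * (c * t) := by
                field_simp
              rw [hphase, Circle.smul_def, Real.fourierChar_apply, harg2,
                NNReal.smul_def, Real.coe_toNNReal _ (sq_nonneg r),
                mul_comm Complex.I ((r * (c * t) : ℝ) : ℂ), smul_comm]
              rfl
            · simp only [kfun, indicator_of_notMem hr, smul_zero]
    have hw : Tendsto (fun t : ℝ => -(c * t) / (2 * π)) l (cocompact ℝ) := by
      have hne : (-c / (2 * π)) ≠ 0 :=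
        div_ne_zero (neg_ne_zero.2 hc.ne') (by positivity)
      have h2 : Tendsto (fun x : ℝ => (-c / (2 * π)) * x) (cocompact ℝ) (cocompact ℝ) := by
        have h3 := (Homeomorph.mulLeft₀ (-c / (2 * π)) hne).map_cocompact
        exact h3.le
      have h4 := h2.comp hl
      refine h4.congr fun t => ?_
      simp only [Function.comp_apply]
      ring
    have hRL := Real.tendsto_integral_exp_smul_cocompact (kfun v g θ)
    have h5 := hRL.comp hw
    exact h5.congr fun t => (hJw t).symm
  -- dominated convergence over the sphere
  have hconv : Tendsto (fun t : ℝ => ∫ θ : sphere (0:E3) 1,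
      (∫ r : Ioi (0:ℝ), Gt v g t (θ, r) ∂(volumeIoiPow 2)) ∂(volume : Measure E3).toSphere)
      l (nhds 0) := by
    have h0 : (0 : ℂ) = ∫ _θ : sphere (0:E3) 1, (0:ℂ) ∂(volume : Measure E3).toSphere := by
      simp
    rw [h0]
    refine tendsto_integral_filter_of_dominated_convergence
      (fun θ => ∫ r : Ioi (0:ℝ), ‖F v g ((r : ℝ) • (θ : E3))‖ ∂(volumeIoiPow 2))
      (Eventually.of_forall fun t => ?_) (Eventually.of_forall fun t => ?_) ?_ ?_
    · exact (hGt_int t).aestronglyMeasurable.integral_prod_right'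
    · refine Eventually.of_forall fun θ => ?_
      refine (norm_integral_le_integral_norm _).trans_eq ?_
      refine integral_congr_ae (Eventually.of_forall fun r => ?_)
      simp only [Gt, norm_mul, norm_phase, one_mul]
    · exact hGint.integral_norm_prod_left
    · exact Eventually.of_forall hlim
  exact hconv.congr fun t => (step1 t).symm

end EndpointAux


/-- for `|v| < 1` and `g` Schwartz,
`∫ (|p| − p·v)⁻¹ e^{i(|p| − p·v)t} g(p) dp/(2|p|) → 0` as `t → ±∞`. -/
theorem endpoint_term_vanishes
    (v : E3) (hv : ‖v‖ < 1) (g : SchwartzMap E3 ℂ) :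
    Tendsto (fun t : ℝ => ∫ p : E3,
        (((‖p‖ - (inner ℝ p v : ℝ) : ℝ)) : ℂ)⁻¹
          * Complex.exp (Complex.I * (((‖p‖ - (inner ℝ p v : ℝ)) * t : ℝ) : ℂ))
          * g p / ((2 * ‖p‖ : ℝ) : ℂ))
      atTop (nhds 0) ∧
    Tendsto (fun t : ℝ => ∫ p : E3,
        (((‖p‖ - (inner ℝ p v : ℝ) : ℝ)) : ℂ)⁻¹
          * Complex.exp (Complex.I * (((‖p‖ - (inner ℝ p v : ℝ)) * t : ℝ) : ℂ))
          * g p / ((2 * ‖p‖ : ℝ) : ℂ))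
      atBot (nhds 0) := by
  constructor
  · refine EndpointAux.main v g hv atTop ?_
    rw [cocompact_eq_atBot_atTop]
    exact tendsto_id.mono_right le_sup_right
  · refine EndpointAux.main v g hv atBot ?_
    rw [cocompact_eq_atBot_atTop]
    exact tendsto_id.mono_right le_sup_left
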